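/- arXiv:2203.00582 — 3 statements merged into one kernel-verified Lean document; each statement's English description precedes it below -/
import Mathlib

section
/- Under the same setup (velocity kinematics of the 3-DOF manipulator, differentiable reference trajectory, positive gains k_x, k_y, k_z, nonzero controller denominators, and the velocity controller ω_φ, ω_θ, v_D), define the Lyapunov function V(t) = ½ e_x(t)² + ½ e_y(t)² + ½ e_z(t)². Then along the closed-loop trajectories V is differentiable with V′(t) = −k_x e_x(t)² − k_y e_y(t)² − k_z e_z(t)² ≤ 0 for all t; in particular V is non-increasing. -/
/-! The controller is a feedback linearization: substituting it into the kinematics cancels every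
coupling term, so each tracking error obeys `e' = -k e`. Hence each `½ e²` has derivative `-k e²`,
and `V' = -k_x e_x² - k_y e_y² - k_z e_z² ≤ 0` forces `V` to be non-increasing. -/

theorem hasDerivAt_half_sq_sub_of_deriv_sub_eq {f g : ℝ → ℝ} {k t : ℝ}
    (hf : DifferentiableAt ℝ f t) (hg : DifferentiableAt ℝ g t)
    (hfg : deriv f t - deriv g t = -(k * (f t - g t))) :
    HasDerivAt (fun s => 1 / 2 * (f s - g s) ^ 2) (-(k * (f t - g t) ^ 2)) t := by
  have he : HasDerivAt (fun s => f s - g s) (-(k * (f t - g t))) t :=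
    hfg ▸ hf.hasDerivAt.sub hg.hasDerivAt
  refine ((he.pow 2).const_mul (1 / 2 : ℝ)).congr_deriv ?_
  ring

/-- Lyapunov analysis of the closed loop: with
`V = ½ e_x² + ½ e_y² + ½ e_z²`, along the closed-loop trajectories
`V′ = −k_x e_x² − k_y e_y² − k_z e_z² ≤ 0`, and `V` is non-increasing. -/
theorem lyapunov_derivative_nonincreasing
    (dx2 dx3 dz2 kx ky kz : ℝ)
    (hkx : 0 < kx) (hky : 0 < ky) (hkz : 0 < kz)
    (x y z xr yr zr φ θ ωφ ωθ vD : ℝ → ℝ)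
    (hx : Differentiable ℝ x) (hy : Differentiable ℝ y)
    (hz : Differentiable ℝ z)
    (hxr : Differentiable ℝ xr) (hyr : Differentiable ℝ yr)
    (hzr : Differentiable ℝ zr)
    (hden1 : ∀ t, dx3 * Real.cos (φ t) ≠ 0)
    (hden2 : ∀ t, dx3 * Real.cos (θ t) * Real.cos (φ t)
        + dx2 * Real.cos (θ t) + dz2 * Real.sin (θ t) ≠ 0)
    (hωφ : ∀ t, ωφ t = (-(ky * (y t - yr t)) + deriv yr t)
        / (dx3 * Real.cos (φ t)))
    (hωθ : ∀ t, ωθ t = (kz * (z t - zr t)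
        + dx3 * Real.sin (θ t) * Real.sin (φ t) * ωφ t - deriv zr t)
        / (dx3 * Real.cos (θ t) * Real.cos (φ t)
          + dx2 * Real.cos (θ t) + dz2 * Real.sin (θ t)))
    (hvD : ∀ t, vD t = -(kx * (x t - xr t))
        + dx3 * (Real.sin (θ t) * Real.cos (φ t) * ωθ t
          + Real.cos (θ t) * Real.sin (φ t) * ωφ t)
        + dx2 * Real.sin (θ t) * ωθ t - dz2 * Real.cos (θ t) * ωθ t
        + deriv xr t)
    (hkinx : ∀ t, deriv x t = -(dx3 * (Real.sin (θ t) * Real.cos (φ t) * ωθ t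
        + Real.cos (θ t) * Real.sin (φ t) * ωφ t))
        - dx2 * Real.sin (θ t) * ωθ t + dz2 * Real.cos (θ t) * ωθ t + vD t)
    (hkiny : ∀ t, deriv y t = dx3 * Real.cos (φ t) * ωφ t)
    (hkinz : ∀ t, deriv z t = -(dx3 * (Real.cos (θ t) * Real.cos (φ t) * ωθ t
        - Real.sin (θ t) * Real.sin (φ t) * ωφ t))
        - dx2 * Real.cos (θ t) * ωθ t - dz2 * Real.sin (θ t) * ωθ t)
    (V : ℝ → ℝ)
    (hV : ∀ t, V t = (1 / 2) * (x t - xr t) ^ 2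
        + (1 / 2) * (y t - yr t) ^ 2 + (1 / 2) * (z t - zr t) ^ 2) :
    (∀ t, HasDerivAt V
        (-(kx * (x t - xr t) ^ 2) - ky * (y t - yr t) ^ 2
          - kz * (z t - zr t) ^ 2) t) ∧
    (∀ t, -(kx * (x t - xr t) ^ 2) - ky * (y t - yr t) ^ 2
        - kz * (z t - zr t) ^ 2 ≤ 0) ∧
    Antitone V := by
  have error_x (t : ℝ) : deriv x t - deriv xr t = -(kx * (x t - xr t)) := by
    rw [hkinx t, hvD t]; ring
  have error_y (t : ℝ) : deriv y t - deriv yr t = -(ky * (y t - yr t)) := by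
    rw [hkiny t, hωφ t, mul_div_cancel₀ _ (hden1 t)]; ring
  have error_z (t : ℝ) : deriv z t - deriv zr t = -(kz * (z t - zr t)) := by
    rw [hkinz t, hωθ t]
    linear_combination -div_mul_cancel₀ (kz * (z t - zr t)
      + dx3 * Real.sin (θ t) * Real.sin (φ t) * ωφ t - deriv zr t) (hden2 t)
  have hasDerivAt_V (t : ℝ) : HasDerivAt V
      (-(kx * (x t - xr t) ^ 2) - ky * (y t - yr t) ^ 2 - kz * (z t - zr t) ^ 2) t := by
    rw [funext hV, sub_eq_add_neg, sub_eq_add_neg]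
    exact ((hasDerivAt_half_sq_sub_of_deriv_sub_eq (hx t) (hxr t) (error_x t)).add
      (hasDerivAt_half_sq_sub_of_deriv_sub_eq (hy t) (hyr t) (error_y t))).add
      (hasDerivAt_half_sq_sub_of_deriv_sub_eq (hz t) (hzr t) (error_z t))
  have V_deriv_nonpos (t : ℝ) :
      -(kx * (x t - xr t) ^ 2) - ky * (y t - yr t) ^ 2 - kz * (z t - zr t) ^ 2 ≤ 0 := by
    linarith [mul_nonneg hkx.le (sq_nonneg (x t - xr t)),
      mul_nonneg hky.le (sq_nonneg (y t - yr t)), mul_nonneg hkz.le (sq_nonneg (z t - zr t))]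
  exact ⟨hasDerivAt_V, V_deriv_nonpos, antitone_of_hasDerivAt_nonpos hasDerivAt_V V_deriv_nonpos⟩
end

section
/- (Asymptotic tracking, Theorem 1.) Under the same setup (velocity kinematics of the 3-DOF manipulator, differentiable reference trajectory (x_r, y_r, z_r), positive gains k_x, k_y, k_z, nonzero controller denominators, and the velocity controller ω_φ, ω_θ, v_D), the end-effector position converges to the reference trajectory: for all t ≥ 0, e_x(t) = e_x(0)·exp(−k_x t), e_y(t) = e_y(0)·exp(−k_y t), e_z(t) = e_z(0)·exp(−k_z t); consequently e_x(t), e_y(t), e_z(t) → 0 as t → ∞, i.e. (x(t), y(t), z(t)) converges to (x_r(t), y_r(t), z_r(t)) asymptotically. -/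
/-!
The controller is a feedback linearization: substituting ω_φ, ω_θ and v_D into the kinematics
cancels every manipulator term (this is where the nonzero denominators enter), leaving each
tracking error `e` with the linear dynamics `e' = -k e`. Then `exp (k t) • e t` has zero
derivative, so `e t = exp (-k t) • e 0`, which tends to zero since `k > 0`.
-/

open Filter Topology

theorem eq_exp_smul_of_deriv_eq_neg_smul {E : Type*} [NormedAddCommGroup E] [NormedSpace ℝ E]
    {k : ℝ} {e : ℝ → E} (he : Differentiable ℝ e) (hde : ∀ t, deriv e t = -k • e t) (t : ℝ) :
    e t = Real.exp (-(k * t)) • e 0 := by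
  have hderiv : ∀ s, HasDerivAt (fun s => Real.exp (k * s) • e s) 0 s := fun s => by
    have hexp : HasDerivAt (fun s => Real.exp (k * s)) (Real.exp (k * s) * k) s := by
      simpa using ((hasDerivAt_id s).const_mul k).exp
    convert hexp.fun_smul (he s).hasDerivAt using 1
    rw [hde s, smul_smul, ← add_smul, mul_neg, neg_add_cancel, zero_smul]
  have hconst := is_const_of_deriv_eq_zero (fun s => (hderiv s).differentiableAt)
    (fun s => (hderiv s).deriv) t 0
  simp only [mul_zero, Real.exp_zero, one_smul] at hconst
  rw [← hconst, smul_smul, ← Real.exp_add, neg_add_cancel, Real.exp_zero, one_smul]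

theorem tendsto_mul_exp_neg_mul_atTop {k : ℝ} (hk : 0 < k) (c : ℝ) :
    Tendsto (fun t => c * Real.exp (-(k * t))) atTop (𝓝 0) := by
  simpa using (Real.tendsto_exp_comp_nhds_zero.2
    (tendsto_neg_atTop_atBot.comp (tendsto_id.const_mul_atTop hk))).const_mul c

theorem tracking_error_eq_and_tendsto_zero {p r : ℝ → ℝ} {k : ℝ}
    (hp : Differentiable ℝ p) (hr : Differentiable ℝ r) (hk : 0 < k)
    (hclosed : ∀ t, deriv p t = deriv r t - k * (p t - r t)) :
    (∀ t, p t - r t = (p 0 - r 0) * Real.exp (-(k * t))) ∧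
      Tendsto (fun t => p t - r t) atTop (𝓝 0) := by
  have hdecay (t : ℝ) : p t - r t = (p 0 - r 0) * Real.exp (-(k * t)) := by
    rw [mul_comm, ← smul_eq_mul]
    refine eq_exp_smul_of_deriv_eq_neg_smul (e := fun s => p s - r s) (hp.sub hr)
      (fun s => ?_) t
    rw [deriv_fun_sub (hp s) (hr s), hclosed s, smul_eq_mul]
    ring
  exact ⟨hdecay, (tendsto_mul_exp_neg_mul_atTop hk _).congr fun t => (hdecay t).symm⟩

/-- Asymptotic tracking (Theorem 1): under the nonlinear velocity controller,
the tracking errors decay exponentially, `e(t) = e(0)·exp(−k t)` for `t ≥ 0`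
componentwise, and hence converge to zero, i.e. the end-effector position
converges to the reference trajectory asymptotically. -/
theorem asymptotic_tracking
    (dx2 dx3 dz2 kx ky kz : ℝ)
    (hkx : 0 < kx) (hky : 0 < ky) (hkz : 0 < kz)
    (x y z xr yr zr φ θ ωφ ωθ vD : ℝ → ℝ)
    (hx : Differentiable ℝ x) (hy : Differentiable ℝ y)
    (hz : Differentiable ℝ z)
    (hxr : Differentiable ℝ xr) (hyr : Differentiable ℝ yr)
    (hzr : Differentiable ℝ zr)
    (hden1 : ∀ t, dx3 * Real.cos (φ t) ≠ 0)
    (hden2 : ∀ t, dx3 * Real.cos (θ t) * Real.cos (φ t)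
        + dx2 * Real.cos (θ t) + dz2 * Real.sin (θ t) ≠ 0)
    (hωφ : ∀ t, ωφ t = (-(ky * (y t - yr t)) + deriv yr t)
        / (dx3 * Real.cos (φ t)))
    (hωθ : ∀ t, ωθ t = (kz * (z t - zr t)
        + dx3 * Real.sin (θ t) * Real.sin (φ t) * ωφ t - deriv zr t)
        / (dx3 * Real.cos (θ t) * Real.cos (φ t)
          + dx2 * Real.cos (θ t) + dz2 * Real.sin (θ t)))
    (hvD : ∀ t, vD t = -(kx * (x t - xr t))
        + dx3 * (Real.sin (θ t) * Real.cos (φ t) * ωθ t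
          + Real.cos (θ t) * Real.sin (φ t) * ωφ t)
        + dx2 * Real.sin (θ t) * ωθ t - dz2 * Real.cos (θ t) * ωθ t
        + deriv xr t)
    (hkinx : ∀ t, deriv x t = -(dx3 * (Real.sin (θ t) * Real.cos (φ t) * ωθ t
        + Real.cos (θ t) * Real.sin (φ t) * ωφ t))
        - dx2 * Real.sin (θ t) * ωθ t + dz2 * Real.cos (θ t) * ωθ t + vD t)
    (hkiny : ∀ t, deriv y t = dx3 * Real.cos (φ t) * ωφ t)
    (hkinz : ∀ t, deriv z t = -(dx3 * (Real.cos (θ t) * Real.cos (φ t) * ωθ t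
        - Real.sin (θ t) * Real.sin (φ t) * ωφ t))
        - dx2 * Real.cos (θ t) * ωθ t - dz2 * Real.sin (θ t) * ωθ t) :
    (∀ t, 0 ≤ t →
      x t - xr t = (x 0 - xr 0) * Real.exp (-(kx * t)) ∧
      y t - yr t = (y 0 - yr 0) * Real.exp (-(ky * t)) ∧
      z t - zr t = (z 0 - zr 0) * Real.exp (-(kz * t))) ∧
    Filter.Tendsto (fun t => x t - xr t) Filter.atTop (nhds 0) ∧
    Filter.Tendsto (fun t => y t - yr t) Filter.atTop (nhds 0) ∧
    Filter.Tendsto (fun t => z t - zr t) Filter.atTop (nhds 0) := by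
  have hclosed_x (t : ℝ) : deriv x t = deriv xr t - kx * (x t - xr t) := by
    rw [hkinx, hvD]
    ring
  have hclosed_y (t : ℝ) : deriv y t = deriv yr t - ky * (y t - yr t) := by
    rw [hkiny, hωφ, mul_div_cancel₀ _ (hden1 t)]
    ring
  have hclosed_z (t : ℝ) : deriv z t = deriv zr t - kz * (z t - zr t) := by
    rw [hkinz, hωθ]
    linear_combination -mul_div_cancel₀ (kz * (z t - zr t)
      + dx3 * Real.sin (θ t) * Real.sin (φ t) * ωφ t - deriv zr t) (hden2 t)
  obtain ⟨hx_eq, hx_lim⟩ := tracking_error_eq_and_tendsto_zero hx hxr hkx hclosed_x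
  obtain ⟨hy_eq, hy_lim⟩ := tracking_error_eq_and_tendsto_zero hy hyr hky hclosed_y
  obtain ⟨hz_eq, hz_lim⟩ := tracking_error_eq_and_tendsto_zero hz hzr hkz hclosed_z
  exact ⟨fun t _ => ⟨hx_eq t, hy_eq t, hz_eq t⟩, hx_lim, hy_lim, hz_lim⟩
end

section
/- Under the same setup (closed-loop error dynamics e_x′ = −k_x e_x, e_y′ = −k_y e_y, e_z′ = −k_z e_z with k_x, k_y, k_z > 0), the Euclidean norm of the tracking error vector e(t) = (e_x(t), e_y(t), e_z(t)) is bounded by its initial value and decays at least exponentially with rate k = min(k_x, k_y, k_z): for all t ≥ 0, ‖e(t)‖ ≤ ‖e(0)‖·exp(−k t) ≤ ‖e(0)‖. -/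
/-!
Each error component solves a scalar linear ODE, so `e_i(t) = e_i(0) exp(-k_i t)`: the product
`e_i(t) exp(k_i t)` has zero derivative. For `t ≥ 0` and `k ≤ k_i` this gives
`|e_i(t)| ≤ |e_i(0)| exp(-k t)`, and squaring and summing the three bounds gives the norm bound.
-/

open Real

theorem eq_mul_exp_of_hasDerivAt_neg_mul {k : ℝ} {f : ℝ → ℝ}
    (hf : ∀ t, HasDerivAt f (-(k * f t)) t) (t : ℝ) : f t = f 0 * exp (-(k * t)) := by
  have hderiv : ∀ s, HasDerivAt (fun s ↦ f s * exp (k * s)) 0 s := fun s ↦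
    ((hf s).mul ((hasDerivAt_id s).const_mul k).exp).congr_deriv (by simp only [id]; ring)
  have hconst := is_const_of_deriv_eq_zero (fun s ↦ (hderiv s).differentiableAt)
    (fun s ↦ (hderiv s).deriv) t 0
  simp only [mul_zero, exp_zero, mul_one] at hconst
  rw [← hconst, exp_neg, mul_inv_cancel_right₀ (exp_ne_zero _)]

theorem abs_le_abs_mul_exp_of_hasDerivAt_neg_mul {k a : ℝ} {f : ℝ → ℝ}
    (hf : ∀ t, HasDerivAt f (-(a * f t)) t) (hka : k ≤ a) {t : ℝ} (ht : 0 ≤ t) :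
    |f t| ≤ |f 0| * exp (-(k * t)) := by
  rw [eq_mul_exp_of_hasDerivAt_neg_mul hf t, abs_mul, abs_exp]
  gcongr

theorem sq_le_sq_mul_sq_of_abs_le_mul {x x₀ r : ℝ} (h : |x| ≤ |x₀| * r) :
    x ^ 2 ≤ x₀ ^ 2 * r ^ 2 := by
  simpa only [sq_abs, mul_pow] using pow_le_pow_left₀ (abs_nonneg x) h 2

theorem sqrt_sum_sq_le_mul {x y z x₀ y₀ z₀ r : ℝ} (hr : 0 ≤ r)
    (hx : |x| ≤ |x₀| * r) (hy : |y| ≤ |y₀| * r) (hz : |z| ≤ |z₀| * r) :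
    √(x ^ 2 + y ^ 2 + z ^ 2) ≤ √(x₀ ^ 2 + y₀ ^ 2 + z₀ ^ 2) * r := by
  rw [← sqrt_sq hr, ← sqrt_mul (by positivity)]
  gcongr
  linarith [sq_le_sq_mul_sq_of_abs_le_mul hx, sq_le_sq_mul_sq_of_abs_le_mul hy,
    sq_le_sq_mul_sq_of_abs_le_mul hz]

/-- Exponential decay of the Euclidean norm of the tracking error: under the
decoupled closed-loop dynamics `e_x′ = −k_x e_x`, `e_y′ = −k_y e_y`,
`e_z′ = −k_z e_z` with positive gains, the Euclidean norm of the error vector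
satisfies `‖e(t)‖ ≤ ‖e(0)‖·exp(−k t) ≤ ‖e(0)‖` for all `t ≥ 0`, where
`k = min(k_x, k_y, k_z)`. -/
theorem error_norm_exponential_decay
    (kx ky kz : ℝ) (hkx : 0 < kx) (hky : 0 < ky) (hkz : 0 < kz)
    (ex ey ez : ℝ → ℝ)
    (hex : ∀ t, HasDerivAt ex (-(kx * ex t)) t)
    (hey : ∀ t, HasDerivAt ey (-(ky * ey t)) t)
    (hez : ∀ t, HasDerivAt ez (-(kz * ez t)) t) :
    ∀ t, 0 ≤ t →
      Real.sqrt (ex t ^ 2 + ey t ^ 2 + ez t ^ 2)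
        ≤ Real.sqrt (ex 0 ^ 2 + ey 0 ^ 2 + ez 0 ^ 2)
          * Real.exp (-(min kx (min ky kz) * t)) ∧
      Real.sqrt (ex 0 ^ 2 + ey 0 ^ 2 + ez 0 ^ 2)
          * Real.exp (-(min kx (min ky kz) * t))
        ≤ Real.sqrt (ex 0 ^ 2 + ey 0 ^ 2 + ez 0 ^ 2) := by
  intro t ht
  have hk : 0 ≤ min kx (min ky kz) := le_min hkx.le (le_min hky.le hkz.le)
  constructor
  · exact sqrt_sum_sq_le_mul (exp_pos _).le
      (abs_le_abs_mul_exp_of_hasDerivAt_neg_mul hex (min_le_left _ _) ht)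
      (abs_le_abs_mul_exp_of_hasDerivAt_neg_mul hey (min_le_of_right_le (min_le_left _ _)) ht)
      (abs_le_abs_mul_exp_of_hasDerivAt_neg_mul hez (min_le_of_right_le (min_le_right _ _)) ht)
  · exact mul_le_of_le_one_right (sqrt_nonneg _)
      (exp_le_one_iff.mpr (neg_nonpos.mpr (mul_nonneg hk ht)))
end
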